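/- arXiv:2411.19864 — 5 statements merged into one kernel-verified Lean document; each statement's English description precedes it below -/
import Mathlib

section
/- For every α ∈ [0, π/4], if β ∈ [0, π/4] satisfies cos(2β) = (cos(2α))², then ∫₀^β 1/√(cos(2θ)) dθ = 2 · ∫₀^α 1/√(1 + (cos(2θ))²) dθ. -/
/-!
Substitute `sin β = sin 2α / √2`. Then `cos 2β = 1 - sin² 2α = cos² 2α`, and differentiating gives
`dβ = 2 cos 2α dα / √(1 + cos² 2α)`, so `dβ / √(cos 2β) = 2 dα / √(1 + cos² 2α)`. The substitution
is increasing on `[0, π/4]`, and the change of variables formula for monotone maps holds for the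
Lebesgue integral of an arbitrary integrand, so the singularity at `β = π/4` needs no limit argument.
-/

open Real Set MeasureTheory

theorem intervalIntegral.integral_comp_smul_deriv_of_strictMonoOn {E : Type*}
    [NormedAddCommGroup E] [NormedSpace ℝ E] {f f' : ℝ → ℝ} {a b : ℝ} (hab : a ≤ b)
    (hf : ContinuousOn f (Icc a b)) (hmono : StrictMonoOn f (Icc a b))
    (hderiv : ∀ x ∈ Ioo a b, HasDerivAt f (f' x) x) (g : ℝ → E) :
    ∫ y in f a..f b, g y = ∫ x in a..b, f' x • g (f x) := by
  have hfab : f a ≤ f b := hmono.monotoneOn (left_mem_Icc.2 hab) (right_mem_Icc.2 hab) hab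
  rw [intervalIntegral.integral_of_le hfab, intervalIntegral.integral_of_le hab,
    integral_Ioc_eq_integral_Ioo, integral_Ioc_eq_integral_Ioo,
    ← hf.image_Ioo_of_strictMonoOn hab hmono]
  exact integral_image_eq_integral_deriv_smul_of_monotoneOn measurableSet_Ioo
    (fun x hx => (hderiv x hx).hasDerivWithinAt) (hmono.monotoneOn.mono Ioo_subset_Icc_self) g

noncomputable def squircleToLemniscate (x : ℝ) : ℝ := arcsin (sin (2 * x) / √2)

lemma abs_sin_two_mul_div_sqrt_two_lt_one (x : ℝ) : |sin (2 * x) / √2| < 1 := by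
  rw [abs_div, abs_of_pos (by positivity : (0 : ℝ) < √2), div_lt_one (by positivity)]
  calc |sin (2 * x)| ≤ 1 := abs_sin_le_one _
    _ < √2 := by rw [lt_sqrt zero_le_one]; norm_num

lemma squircleToLemniscate_zero : squircleToLemniscate 0 = 0 := by
  simp [squircleToLemniscate]

lemma continuous_squircleToLemniscate : Continuous squircleToLemniscate :=
  continuous_arcsin.comp (by fun_prop)

lemma cos_two_mul_squircleToLemniscate (x : ℝ) :
    cos (2 * squircleToLemniscate x) = cos (2 * x) ^ 2 := by
  obtain ⟨hlo, hhi⟩ := abs_le.1 (abs_sin_two_mul_div_sqrt_two_lt_one x).le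
  rw [cos_two_mul_eq_one_sub, squircleToLemniscate, sin_arcsin hlo hhi, div_pow,
    sq_sqrt zero_le_two]
  linarith [sin_sq_add_cos_sq (2 * x)]

lemma hasDerivAt_squircleToLemniscate (x : ℝ) :
    HasDerivAt squircleToLemniscate (2 * cos (2 * x) / √(1 + cos (2 * x) ^ 2)) x := by
  have hlt := abs_lt.1 (abs_sin_two_mul_div_sqrt_two_lt_one x)
  have hinner : HasDerivAt (fun x => sin (2 * x) / √2) (cos (2 * x) * 2 / √2) x :=
    (((hasDerivAt_id x).const_mul 2).sin.congr_deriv (by simp)).div_const _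
  refine ((hasDerivAt_arcsin hlt.1.ne' hlt.2.ne).comp x hinner).congr_deriv ?_
  have hsqrt : √(1 + cos (2 * x) ^ 2) = √2 * √(1 - (sin (2 * x) / √2) ^ 2) := by
    rw [← sqrt_mul zero_le_two, div_pow, sq_sqrt zero_le_two]
    congr 1
    linarith [sin_sq_add_cos_sq (2 * x)]
  rw [hsqrt]
  field_simp

lemma strictMonoOn_squircleToLemniscate :
    StrictMonoOn squircleToLemniscate (Icc (-(π / 4)) (π / 4)) := by
  intro a ha b hb hab
  have hmem (x : ℝ) : sin (2 * x) / √2 ∈ Icc (-1) 1 :=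
    abs_le.1 (abs_sin_two_mul_div_sqrt_two_lt_one x).le
  refine strictMonoOn_arcsin (hmem a) (hmem b) ?_
  gcongr
  exact sin_lt_sin_of_lt_of_le_pi_div_two (by linarith [ha.1]) (by linarith [hb.2]) (by linarith)

lemma eq_squircleToLemniscate_of_cos_two_mul_eq {α β : ℝ} (hα : α ∈ Icc 0 (π / 2))
    (hβ : β ∈ Icc 0 (π / 2)) (h : cos (2 * β) = cos (2 * α) ^ 2) :
    β = squircleToLemniscate α := by
  have hsin : 0 ≤ sin (2 * α) / √2 :=
    div_nonneg (sin_nonneg_of_nonneg_of_le_pi (by linarith [hα.1]) (by linarith [hα.2]))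
      (sqrt_nonneg 2)
  have hlo : 0 ≤ squircleToLemniscate α := arcsin_nonneg.2 hsin
  have hhi : squircleToLemniscate α ≤ π / 2 := arcsin_le_pi_div_two _
  have := injOn_cos ⟨by linarith [hβ.1], by linarith [hβ.2]⟩ ⟨by linarith, by linarith⟩
    (h.trans (cos_two_mul_squircleToLemniscate α).symm)
  linarith

lemma squircleToLemniscate_deriv_mul_lemniscate_integrand {x : ℝ} (hx : 0 < cos (2 * x)) :
    2 * cos (2 * x) / √(1 + cos (2 * x) ^ 2) * (1 / √(cos (2 * squircleToLemniscate x))) =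
      2 * (1 / √(1 + cos (2 * x) ^ 2)) := by
  rw [cos_two_mul_squircleToLemniscate, sqrt_sq hx.le]
  field_simp

theorem lemniscate_arc_eq_twice_squircle_area
    (α β : ℝ) (hα : α ∈ Set.Icc 0 (π / 4)) (hβ : β ∈ Set.Icc 0 (π / 4))
    (h : Real.cos (2 * β) = (Real.cos (2 * α)) ^ 2) :
    ∫ θ in (0:ℝ)..β, 1 / Real.sqrt (Real.cos (2 * θ)) =
      2 * ∫ θ in (0:ℝ)..α, 1 / Real.sqrt (1 + (Real.cos (2 * θ)) ^ 2) := by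
  have hπ := pi_pos
  have hβα : β = squircleToLemniscate α :=
    eq_squircleToLemniscate_of_cos_two_mul_eq ⟨hα.1, by linarith [hα.2]⟩
      ⟨hβ.1, by linarith [hβ.2]⟩ h
  have hcov := intervalIntegral.integral_comp_smul_deriv_of_strictMonoOn hα.1
    continuous_squircleToLemniscate.continuousOn
    (strictMonoOn_squircleToLemniscate.mono (Icc_subset_Icc (by linarith) hα.2))
    (fun x _ => hasDerivAt_squircleToLemniscate x) (fun θ => 1 / √(cos (2 * θ)))
  rw [squircleToLemniscate_zero] at hcov
  rw [hβα, hcov, ← intervalIntegral.integral_const_mul]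
  refine intervalIntegral.integral_congr_Ioo_of_le hα.1 fun x hx => ?_
  exact squircleToLemniscate_deriv_mul_lemniscate_integrand
    (cos_pos_of_mem_Ioo ⟨by linarith [hx.1], by linarith [hx.2, hα.2]⟩)
end

section
/- For every R ∈ [0, 1], ∫_{R²}^1 1/√(1 − r⁴) dr = √2 · ∫₀^{√((1−R²)/(1+R²))} 1/√(1 + v⁴) dv. -/
/-!
Substitute `r = (1 - v²) / (1 + v²)`, the inverse of `v = √((1 - r) / (1 + r))`. Then
`dr = -4v / (1 + v²)² dv` and `1 - r⁴ = 8v²(1 + v⁴) / (1 + v²)⁴`, so for `v > 0` the transformed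
integrand is exactly `√2 / √(1 + v⁴)`. The substitution is decreasing, and the change of variables
formula for antitone maps needs no integrability hypothesis, so the singularity at `r = 1` costs
nothing.
-/

open Set MeasureTheory

/-- `cos θ` in terms of `t = tan (θ / 2)`. -/
noncomputable def cosOfTanHalf (t : ℝ) : ℝ := (1 - t ^ 2) / (1 + t ^ 2)

theorem continuous_cosOfTanHalf : Continuous cosOfTanHalf :=
  (continuous_const.sub (continuous_pow 2)).div (continuous_const.add (continuous_pow 2))
    fun t => by positivity

theorem hasDerivAt_cosOfTanHalf (t : ℝ) :
    HasDerivAt cosOfTanHalf (-(4 * t / (1 + t ^ 2) ^ 2)) t := by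
  refine (((hasDerivAt_pow 2 t).const_sub 1).div ((hasDerivAt_pow 2 t).const_add 1)
    (by positivity)).congr_deriv ?_
  push_cast
  ring

theorem cosOfTanHalf_zero : cosOfTanHalf 0 = 1 := by
  simp [cosOfTanHalf]

theorem cosOfTanHalf_sqrt {r : ℝ} (h₁ : -1 < r) (h₂ : r ≤ 1) :
    cosOfTanHalf √((1 - r) / (1 + r)) = r := by
  have hr : 0 < 1 + r := by linarith
  rw [cosOfTanHalf, Real.sq_sqrt (div_nonneg (by linarith) hr.le)]
  field_simp
  ring

theorem one_sub_cosOfTanHalf_pow_four (t : ℝ) :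
    1 - cosOfTanHalf t ^ 4 = 8 * t ^ 2 * (1 + t ^ 4) / (1 + t ^ 2) ^ 4 := by
  rw [cosOfTanHalf]
  field_simp
  ring

theorem sqrt_one_sub_cosOfTanHalf_pow_four {t : ℝ} (ht : 0 ≤ t) :
    √(1 - cosOfTanHalf t ^ 4) = √2 * (2 * t * √(1 + t ^ 4) / (1 + t ^ 2) ^ 2) := by
  have hroot : 0 ≤ 2 * t * √(1 + t ^ 4) / (1 + t ^ 2) ^ 2 := by positivity
  rw [one_sub_cosOfTanHalf_pow_four, ← Real.sqrt_sq hroot, ← Real.sqrt_mul zero_le_two]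
  congr 1
  rw [div_pow, mul_pow, mul_pow, Real.sq_sqrt (by positivity)]
  ring

theorem mul_one_div_sqrt_one_sub_cosOfTanHalf_pow_four {t : ℝ} (ht : 0 < t) :
    4 * t / (1 + t ^ 2) ^ 2 * (1 / √(1 - cosOfTanHalf t ^ 4)) = √2 * (1 / √(1 + t ^ 4)) := by
  rw [sqrt_one_sub_cosOfTanHalf_pow_four ht.le]
  have : 0 < √(1 + t ^ 4) := by positivity
  have : 0 < √2 := by positivity
  field_simp
  rw [Real.sq_sqrt zero_le_two]
  ring

theorem integral_one_div_sqrt_one_sub_pow_four {a : ℝ} (h₁ : -1 < a) (h₂ : a ≤ 1) :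
    ∫ r in a..1, 1 / √(1 - r ^ 4) =
      √2 * ∫ v in (0 : ℝ)..√((1 - a) / (1 + a)), 1 / √(1 + v ^ 4) := by
  set V := √((1 - a) / (1 + a))
  have hV : 0 ≤ V := Real.sqrt_nonneg _
  have hsubst := integral_Icc_deriv_smul_of_deriv_nonpos (g := fun r => 1 / √(1 - r ^ 4))
    continuous_cosOfTanHalf.continuousOn (fun t _ => hasDerivAt_cosOfTanHalf t)
    (fun t ht => neg_nonpos.2 (div_nonneg (by linarith [ht.1]) (by positivity))) hV
  rw [cosOfTanHalf_sqrt h₁ h₂, cosOfTanHalf_zero] at hsubst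
  rw [intervalIntegral.integral_of_le h₂, ← integral_Icc_eq_integral_Ioc,
    ← neg_neg (∫ r in Icc a 1, _), ← hsubst, ← integral_neg, integral_Icc_eq_integral_Ioc,
    intervalIntegral.integral_of_le hV, ← integral_const_mul]
  refine setIntegral_congr_fun measurableSet_Ioc fun t ht => ?_
  simp only [smul_eq_mul, neg_mul, neg_neg]
  exact mul_one_div_sqrt_one_sub_cosOfTanHalf_pow_four ht.1

theorem lemniscate_arc_from_Rsq_eq_sqrt_two_mul_squircle
    (R : ℝ) (hR : R ∈ Set.Icc (0:ℝ) 1) :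
    ∫ r in (R ^ 2)..1, 1 / Real.sqrt (1 - r ^ 4) =
      Real.sqrt 2 *
        ∫ v in (0:ℝ)..Real.sqrt ((1 - R ^ 2) / (1 + R ^ 2)), 1 / Real.sqrt (1 + v ^ 4) :=
  integral_one_div_sqrt_one_sub_pow_four (neg_one_lt_zero.trans_le (sq_nonneg R))
    (pow_le_one₀ hR.1 hR.2)
end

section
/- ∫₀¹ 1/√(1 − x⁴) dx = √2 · ∫₀¹ (1 − x⁴)^{1/4} dx. -/
/-!
Integrating the derivative of `x * (1 - x ^ 4) ^ (1/4)` by parts gives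
`∫₀¹ (1 - x⁴)^(-3/4) = 2 ∫₀¹ (1 - x⁴)^(1/4)`. The substitution `y = √2 x (1 - x⁴)^(1/4)`
satisfies `1 - y⁴ = (1 - 2x⁴)²`, so `dy / √(1 - y⁴) = ± √2 (1 - x⁴)^(-3/4) dx`. As `x` runs over
`[0, 1]`, `y` rises from `0` to `1` (at `2x⁴ = 1`) and falls back to `0`, so each half covers the
lemniscate integral once: `√2 ∫₀¹ (1 - x⁴)^(-3/4) = 2 ∫₀¹ dy / √(1 - y⁴)`.
-/

open Real Set MeasureTheory intervalIntegral

section OneSubPow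

variable {n : ℕ} {x : ℝ}

theorem one_sub_pow_pos (hn : n ≠ 0) (hx : x ∈ Ioo 0 1) : 0 < 1 - x ^ n := by
  linarith [pow_lt_one₀ hx.1.le hx.2 hn]

theorem one_sub_pow_nonneg (hx : x ∈ Icc 0 1) : 0 ≤ 1 - x ^ n := by
  linarith [pow_le_one₀ hx.1 hx.2 (n := n)]

theorem intervalIntegrable_one_sub_pow_rpow (hn : n ≠ 0) {a : ℝ} (ha : -1 < a) :
    IntervalIntegrable (fun x : ℝ => (1 - x ^ n) ^ a) volume 0 1 := by
  rcases le_or_gt 0 a with ha₀ | ha₀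
  · exact ((continuous_const.sub (continuous_pow n)).rpow_const fun _ => Or.inr ha₀)
      |>.intervalIntegrable 0 1
  have hdom : IntervalIntegrable (fun x : ℝ => (1 - x) ^ a) volume 0 1 := by
    simpa using ((intervalIntegrable_rpow' (a := 0) (b := 1) ha).comp_sub_left 1).symm
  refine hdom.mono_fun (by fun_prop : Measurable _).aestronglyMeasurable ?_
  rw [uIoc_of_le zero_le_one]
  refine ae_restrict_of_forall_mem measurableSet_Ioc fun x hx => ?_
  rcases hx.2.eq_or_lt with rfl | hx₁
  · simp
  have hx' : x ∈ Ioo 0 1 := ⟨hx.1, hx₁⟩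
  dsimp only
  rw [norm_of_nonneg (rpow_nonneg (one_sub_pow_pos hn hx').le _),
    norm_of_nonneg (rpow_nonneg (sub_pos.2 hx₁).le _)]
  exact rpow_le_rpow_of_nonpos (sub_pos.2 hx₁)
    (sub_le_sub_left (pow_le_of_le_one hx.1.le hx₁.le hn) 1) ha₀.le

theorem hasDerivAt_mul_one_sub_pow_rpow (hn : n ≠ 0) (p : ℝ) (hx : 1 - x ^ n ≠ 0) :
    HasDerivAt (fun y => y * (1 - y ^ n) ^ p)
      ((1 + n * p) * (1 - x ^ n) ^ p - n * p * (1 - x ^ n) ^ (p - 1)) x := by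
  have h := (hasDerivAt_id x).mul
    (((hasDerivAt_pow n x).const_sub 1).rpow_const (p := p) (Or.inl hx))
  refine h.congr_deriv ?_
  have hxn : x * x ^ (n - 1) = x ^ n := by
    rw [← pow_succ', Nat.sub_add_cancel (Nat.one_le_iff_ne_zero.2 hn)]
  rw [rpow_sub_one hx]
  simp only [id_eq]
  field_simp
  linear_combination (-(n * p * (1 - x ^ n) ^ p)) * hxn

theorem integral_one_sub_pow_rpow_sub_one (hn : n ≠ 0) {p : ℝ} (hp : 0 < p) :
    n * p * ∫ x in (0:ℝ)..1, (1 - x ^ n) ^ (p - 1) =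
      (1 + n * p) * ∫ x in (0:ℝ)..1, (1 - x ^ n) ^ p := by
  have hcont : ContinuousOn (fun y : ℝ => y * (1 - y ^ n) ^ p) (Icc 0 1) :=
    (continuous_id.mul ((continuous_const.sub (continuous_pow n)).rpow_const
      fun _ => Or.inr hp.le)).continuousOn
  have hint₁ := intervalIntegrable_one_sub_pow_rpow hn (a := p) (by linarith)
  have hint₂ := intervalIntegrable_one_sub_pow_rpow hn (a := p - 1) (by linarith)
  have hFTC := integral_eq_sub_of_hasDerivAt_of_le zero_le_one hcont
    (fun x hx => hasDerivAt_mul_one_sub_pow_rpow hn p (one_sub_pow_pos hn hx).ne')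
    ((hint₁.const_mul _).sub (hint₂.const_mul _))
  rw [integral_sub (hint₁.const_mul _) (hint₂.const_mul _), intervalIntegral.integral_const_mul,
    intervalIntegral.integral_const_mul] at hFTC
  simp only [one_pow, sub_self, zero_rpow hp.ne', mul_zero, zero_mul] at hFTC
  linarith

end OneSubPow

noncomputable def arcsl (u : ℝ) : ℝ := ∫ t in (0:ℝ)..u, 1 / √(1 - t ^ 4)

theorem arcsl_zero : arcsl 0 = 0 := integral_same

theorem continuousOn_one_div_sqrt_one_sub_pow_four :
    ContinuousOn (fun t : ℝ => 1 / √(1 - t ^ 4)) (Ioo 0 1) :=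
  continuousOn_const.div (by fun_prop) fun t ht =>
    (sqrt_pos.2 (one_sub_pow_pos four_ne_zero ht)).ne'

theorem intervalIntegrable_one_div_sqrt_one_sub_pow_four :
    IntervalIntegrable (fun t : ℝ => 1 / √(1 - t ^ 4)) volume 0 1 := by
  refine (intervalIntegrable_one_sub_pow_rpow four_ne_zero (a := -(1 / 2)) (by norm_num)).congr ?_
  rw [uIoc_of_le zero_le_one]
  intro t ht
  dsimp only
  rw [rpow_neg (one_sub_pow_nonneg (Ioc_subset_Icc_self ht)), ← sqrt_eq_rpow, one_div]

theorem continuousOn_arcsl : ContinuousOn arcsl (Icc 0 1) := by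
  have h := continuousOn_primitive_interval' intervalIntegrable_one_div_sqrt_one_sub_pow_four
    left_mem_uIcc
  rwa [uIcc_of_le zero_le_one] at h

theorem hasDerivAt_arcsl {u : ℝ} (hu : u ∈ Ioo 0 1) : HasDerivAt arcsl (1 / √(1 - u ^ 4)) u :=
  integral_hasDerivAt_right
    (intervalIntegrable_one_div_sqrt_one_sub_pow_four.mono_set (by
      rw [uIcc_of_le zero_le_one, uIcc_of_le hu.1.le]; exact Icc_subset_Icc le_rfl hu.2.le))
    (continuousOn_one_div_sqrt_one_sub_pow_four.stronglyMeasurableAtFilter isOpen_Ioo u hu)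
    (continuousOn_one_div_sqrt_one_sub_pow_four.continuousAt (Ioo_mem_nhds hu.1 hu.2))

noncomputable def lemniscateSubst (x : ℝ) : ℝ := √2 * (x * (1 - x ^ 4) ^ (1 / 4 : ℝ))

theorem lemniscateSubst_zero : lemniscateSubst 0 = 0 := by simp [lemniscateSubst]

theorem lemniscateSubst_one : lemniscateSubst 1 = 0 := by simp [lemniscateSubst]

theorem continuous_lemniscateSubst : Continuous lemniscateSubst :=
  continuous_const.mul (continuous_id.mul
    ((continuous_const.sub (continuous_pow 4)).rpow_const fun _ => Or.inr (by norm_num)))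

theorem lemniscateSubst_nonneg {x : ℝ} (hx : x ∈ Icc 0 1) : 0 ≤ lemniscateSubst x :=
  mul_nonneg (sqrt_nonneg 2) (mul_nonneg hx.1 (rpow_nonneg (one_sub_pow_nonneg hx) _))

theorem one_sub_lemniscateSubst_pow_four {x : ℝ} (hx : x ∈ Icc 0 1) :
    1 - lemniscateSubst x ^ 4 = (1 - 2 * x ^ 4) ^ 2 := by
  have h₁ : ((1 - x ^ 4) ^ (1 / 4 : ℝ)) ^ 4 = 1 - x ^ 4 := by
    rw [show (1 / 4 : ℝ) = ((4 : ℕ) : ℝ)⁻¹ by norm_num,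
      rpow_inv_natCast_pow (one_sub_pow_nonneg hx) four_ne_zero]
  have h₂ : √2 ^ 4 = 4 := by
    rw [show 4 = 2 * 2 by rfl, pow_mul, sq_sqrt zero_le_two]; norm_num
  rw [lemniscateSubst, mul_pow, mul_pow, h₁, h₂]
  ring

theorem lemniscateSubst_mem_Icc {x : ℝ} (hx : x ∈ Icc 0 1) : lemniscateSubst x ∈ Icc 0 1 := by
  refine ⟨lemniscateSubst_nonneg hx, (pow_le_one_iff_of_nonneg (lemniscateSubst_nonneg hx)
    four_ne_zero).1 ?_⟩
  nlinarith [one_sub_lemniscateSubst_pow_four hx, sq_nonneg (1 - 2 * x ^ 4)]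

theorem lemniscateSubst_mem_Ioo {x : ℝ} (hx : x ∈ Ioo 0 1) (hx₂ : 1 - 2 * x ^ 4 ≠ 0) :
    lemniscateSubst x ∈ Ioo 0 1 := by
  have hx' := Ioo_subset_Icc_self hx
  refine ⟨mul_pos (by positivity)
      (mul_pos hx.1 (rpow_pos_of_pos (one_sub_pow_pos four_ne_zero hx) _)),
    (pow_lt_one_iff_of_nonneg (lemniscateSubst_nonneg hx') four_ne_zero).1 ?_⟩
  have := one_sub_lemniscateSubst_pow_four hx'
  linarith [pow_pos (abs_pos.2 hx₂) 2, sq_abs (1 - 2 * x ^ 4)]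

theorem hasDerivAt_lemniscateSubst {x : ℝ} (hx : x ∈ Ioo 0 1) :
    HasDerivAt lemniscateSubst (√2 * (1 - 2 * x ^ 4) * (1 - x ^ 4) ^ (-(3 / 4) : ℝ)) x := by
  have hpos := one_sub_pow_pos four_ne_zero hx
  refine ((hasDerivAt_mul_one_sub_pow_rpow four_ne_zero _ hpos.ne').const_mul √2).congr_deriv ?_
  have h : (1 - x ^ 4) ^ (1 / 4 : ℝ) = (1 - x ^ 4) * (1 - x ^ 4) ^ (-(3 / 4) : ℝ) := by
    rw [← rpow_one_add' hpos.le (by norm_num)]; norm_num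
  rw [h, show (1 / 4 - 1 : ℝ) = -(3 / 4) by norm_num]
  push_cast
  ring

theorem hasDerivAt_arcsl_comp_lemniscateSubst {x : ℝ} (hx : x ∈ Ioo 0 1)
    (hx₂ : 1 - 2 * x ^ 4 ≠ 0) :
    HasDerivAt (fun y => arcsl (lemniscateSubst y))
      ((1 - 2 * x ^ 4) / |1 - 2 * x ^ 4| * (√2 * (1 - x ^ 4) ^ (-(3 / 4) : ℝ))) x := by
  refine ((hasDerivAt_arcsl (lemniscateSubst_mem_Ioo hx hx₂)).comp x
    (hasDerivAt_lemniscateSubst hx)).congr_deriv ?_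
  rw [one_sub_lemniscateSubst_pow_four (Ioo_subset_Icc_self hx), sqrt_sq_eq_abs]
  ring

theorem exists_mem_Ioo_two_mul_pow_four_eq_one : ∃ c ∈ Ioo (0:ℝ) 1, 2 * c ^ 4 = 1 := by
  refine ⟨(1 / 2) ^ (1 / 4 : ℝ), ⟨by positivity, rpow_lt_one (by norm_num) (by norm_num)
    (by norm_num)⟩, ?_⟩
  rw [show (1 / 4 : ℝ) = ((4 : ℕ) : ℝ)⁻¹ by norm_num, rpow_inv_natCast_pow (by norm_num)
    four_ne_zero]
  norm_num

theorem lemniscateSubst_eq_one_of_two_mul_pow_four_eq_one {c : ℝ} (hc : c ∈ Icc 0 1)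
    (hc₄ : 2 * c ^ 4 = 1) : lemniscateSubst c = 1 := by
  have h := one_sub_lemniscateSubst_pow_four hc
  rw [hc₄, sub_self, zero_pow two_ne_zero, sub_eq_zero, eq_comm] at h
  exact (pow_eq_one_iff_of_nonneg (lemniscateSubst_nonneg hc) four_ne_zero).1 h

theorem sqrt_two_mul_integral_one_sub_pow_four_rpow :
    √2 * ∫ x in (0:ℝ)..1, (1 - x ^ 4) ^ (-(3 / 4) : ℝ) = 2 * arcsl 1 := by
  obtain ⟨c, hc, hc₄⟩ := exists_mem_Ioo_two_mul_pow_four_eq_one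
  have hsubst_c := lemniscateSubst_eq_one_of_two_mul_pow_four_eq_one (Ioo_subset_Icc_self hc) hc₄
  set f := fun x : ℝ => √2 * (1 - x ^ 4) ^ (-(3 / 4) : ℝ)
  have hint : IntervalIntegrable f volume 0 1 :=
    (intervalIntegrable_one_sub_pow_rpow four_ne_zero (by norm_num)).const_mul √2
  have hint_left : IntervalIntegrable f volume 0 c := hint.mono_set <| by
    rw [uIcc_of_le hc.1.le, uIcc_of_le zero_le_one]; exact Icc_subset_Icc le_rfl hc.2.le
  have hint_right : IntervalIntegrable f volume c 1 := hint.mono_set <| by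
    rw [uIcc_of_le hc.2.le, uIcc_of_le zero_le_one]; exact Icc_subset_Icc hc.1.le le_rfl
  have hcont : ContinuousOn (fun y => arcsl (lemniscateSubst y)) (Icc 0 1) :=
    continuousOn_arcsl.comp continuous_lemniscateSubst.continuousOn
      fun x hx => lemniscateSubst_mem_Icc hx
  have hderiv_left (x : ℝ) (hx : x ∈ Ioo 0 c) :
      HasDerivAt (fun y => arcsl (lemniscateSubst y)) (f x) x := by
    have hx₂ : 0 < 1 - 2 * x ^ 4 := by nlinarith [pow_lt_pow_left₀ hx.2 hx.1.le four_ne_zero]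
    refine (hasDerivAt_arcsl_comp_lemniscateSubst ⟨hx.1, hx.2.trans hc.2⟩ hx₂.ne').congr_deriv ?_
    rw [abs_of_pos hx₂, div_self hx₂.ne', one_mul]
  have hderiv_right (x : ℝ) (hx : x ∈ Ioo c 1) :
      HasDerivAt (fun y => arcsl (lemniscateSubst y)) (-f x) x := by
    have hx₂ : 1 - 2 * x ^ 4 < 0 := by nlinarith [pow_lt_pow_left₀ hx.1 hc.1.le four_ne_zero]
    refine (hasDerivAt_arcsl_comp_lemniscateSubst ⟨hc.1.trans hx.1, hx.2⟩ hx₂.ne).congr_deriv ?_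
    rw [abs_of_neg hx₂, div_neg, div_self hx₂.ne, neg_one_mul]
  have hleft : ∫ x in (0:ℝ)..c, f x = arcsl 1 := by
    rw [integral_eq_sub_of_hasDerivAt_of_le hc.1.le (hcont.mono (Icc_subset_Icc le_rfl hc.2.le))
      hderiv_left hint_left, hsubst_c, lemniscateSubst_zero, arcsl_zero, sub_zero]
  have hright : ∫ x in c..1, f x = arcsl 1 := by
    rw [← neg_inj, ← intervalIntegral.integral_neg, integral_eq_sub_of_hasDerivAt_of_le hc.2.le
      (hcont.mono (Icc_subset_Icc hc.1.le le_rfl)) hderiv_right hint_right.neg, hsubst_c,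
      lemniscateSubst_one, arcsl_zero, zero_sub]
  rw [← intervalIntegral.integral_const_mul, ← integral_add_adjacent_intervals hint_left hint_right,
    hleft, hright, two_mul]

theorem lemniscate_integral_eq_sqrt_two_mul_squircle_integral :
    ∫ x in (0:ℝ)..1, 1 / Real.sqrt (1 - x ^ 4) =
      Real.sqrt 2 * ∫ x in (0:ℝ)..1, (1 - x ^ 4) ^ ((1:ℝ) / 4) := by
  have hreduction : ∫ x in (0:ℝ)..1, (1 - x ^ 4) ^ (-(3 / 4) : ℝ) =
      2 * ∫ x in (0:ℝ)..1, (1 - x ^ 4) ^ ((1:ℝ) / 4) := by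
    have h := integral_one_sub_pow_rpow_sub_one four_ne_zero (p := 1 / 4) (by norm_num)
    norm_num at h
    exact h
  have hsubst := sqrt_two_mul_integral_one_sub_pow_four_rpow
  rw [hreduction] at hsubst
  show arcsl 1 = _
  linarith
end

section
/- For every T ∈ [0, 1], setting R = √2·T/√(1 + T⁴), one has ∫₀^R 1/√(1 − r⁴) dr = √2 · ∫₀^T 1/√(1 + t⁴) dt. -/
/-! The substitution `r = φ(t) = √2 t / √(1 + t⁴)` is increasing on `[0, 1]`, fixes `0` and sends
`T` to `R`. The identity `1 - φ(t)⁴ = ((1 - t⁴) / (1 + t⁴))²` together with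
`φ'(t) = √2 (1 - t⁴) / (1 + t⁴)^(3/2)` turns `dr / √(1 - r⁴)` into `√2 dt / √(1 + t⁴)`. As `φ` is monotone, the
change of variables holds without any integrability assumption on the singular integrand. -/

open Set MeasureTheory intervalIntegral

noncomputable def siegelMap (t : ℝ) : ℝ := √2 * t / √(1 + t ^ 4)

noncomputable def siegelMapDeriv (t : ℝ) : ℝ := √2 * (1 - t ^ 4) / ((1 + t ^ 4) * √(1 + t ^ 4))

lemma hasDerivAt_siegelMap (t : ℝ) : HasDerivAt siegelMap (siegelMapDeriv t) t := by
  have hpos : 0 < 1 + t ^ 4 := by positivity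
  have hsqrt : HasDerivAt (fun s : ℝ => √(1 + s ^ 4)) (4 * t ^ 3 / (2 * √(1 + t ^ 4))) t := by
    simpa using ((hasDerivAt_pow 4 t).const_add 1).sqrt hpos.ne'
  have hquot := ((hasDerivAt_id' t).const_mul √2).div hsqrt (Real.sqrt_pos.2 hpos).ne'
  refine hquot.congr_deriv ?_
  have hsq := Real.sq_sqrt hpos.le
  unfold siegelMapDeriv
  field_simp
  rw [hsq]
  ring

lemma one_sub_siegelMap_pow_four (t : ℝ) :
    1 - siegelMap t ^ 4 = ((1 - t ^ 4) / (1 + t ^ 4)) ^ 2 := by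
  have hpos : 0 < 1 + t ^ 4 := by positivity
  have h2 : √2 ^ 2 = 2 := Real.sq_sqrt zero_le_two
  have hsq := Real.sq_sqrt hpos.le
  unfold siegelMap
  rw [div_pow, show (4 : ℕ) = 2 * 2 from rfl, pow_mul, mul_pow, pow_mul, h2, hsq]
  field_simp
  ring

lemma siegelMapDeriv_nonneg {t : ℝ} (ht : t ^ 4 ≤ 1) : 0 ≤ siegelMapDeriv t := by
  unfold siegelMapDeriv
  have : 0 ≤ 1 - t ^ 4 := by linarith
  positivity

lemma one_div_sqrt_one_sub_siegelMap_pow_four_mul_deriv {t : ℝ} (ht : t ^ 4 < 1) :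
    1 / √(1 - siegelMap t ^ 4) * siegelMapDeriv t = √2 * (1 / √(1 + t ^ 4)) := by
  have hpos : 0 < 1 + t ^ 4 := by positivity
  have hsub : 0 < 1 - t ^ 4 := by linarith
  rw [one_sub_siegelMap_pow_four, Real.sqrt_sq (by positivity), siegelMapDeriv]
  have := Real.sqrt_pos.2 hpos
  field_simp

theorem siegel_relation (T : ℝ) (hT : T ∈ Set.Icc (0:ℝ) 1)
    (R : ℝ) (hR : R = Real.sqrt 2 * T / Real.sqrt (1 + T ^ 4)) :
    ∫ r in (0:ℝ)..R, 1 / Real.sqrt (1 - r ^ 4) =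
      Real.sqrt 2 * ∫ t in (0:ℝ)..T, 1 / Real.sqrt (1 + t ^ 4) := by
  obtain ⟨hT0, hT1⟩ := hT
  have hderiv_nonneg : ∀ t ∈ Ioo (min 0 T) (max 0 T), 0 ≤ siegelMapDeriv t := by
    rw [min_eq_left hT0, max_eq_right hT0]
    exact fun t ht => siegelMapDeriv_nonneg (pow_le_one₀ ht.1.le (ht.2.le.trans hT1))
  have hsubst := integral_comp_mul_deriv_of_deriv_nonneg (g := fun r => 1 / √(1 - r ^ 4))
    (fun t _ => (hasDerivAt_siegelMap t).continuousAt.continuousWithinAt)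
    (fun t _ => hasDerivAt_siegelMap t) hderiv_nonneg
  rw [show siegelMap 0 = 0 by simp [siegelMap], show siegelMap T = R from hR.symm] at hsubst
  rw [← hsubst, ← intervalIntegral.integral_const_mul]
  refine integral_congr_ae ?_
  -- At `t = 1` the pulled-back integrand is `1 / √0 * 0 = 0`, so the identity only holds a.e.
  filter_upwards [Measure.ae_ne volume 1] with t ht1 ht
  rw [uIoc_of_le hT0] at ht
  exact one_div_sqrt_one_sub_siegelMap_pow_four_mul_deriv
    (pow_lt_one₀ ht.1.le (lt_of_le_of_ne (ht.2.trans hT1) ht1) four_ne_zero)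
end

section
/- ∫₀¹ 1/√(1 − x⁴) dx = Γ(1/4)² / (4·√(2π)), where Γ is the Gamma function. -/
/-!
The substitution `u = x ^ 4` turns the integral into `(1/4) B(1/4, 1/2)
= Γ(1/4) Γ(1/2) / (4 Γ(3/4))`. With `Γ(1/2) = √π` and the reflection formula
`Γ(1/4) Γ(3/4) = π / sin(π/4) = π √2`, this is `Γ(1/4)² / (4 √(2π))`.
-/

open Real MeasureTheory Set

theorem integral_comp_rpow_Ioo_zero_one {E : Type*} [NormedAddCommGroup E] [NormedSpace ℝ E]
    (g : ℝ → E) {p : ℝ} (hp : 0 < p) :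
    ∫ x in Ioo 0 1, (p * x ^ (p - 1)) • g (x ^ p) = ∫ y in Ioo 0 1, g y := by
  have himage : (· ^ p) '' Ioo 0 1 = Ioo (0 : ℝ) 1 := by
    ext y
    constructor
    · rintro ⟨x, hx, rfl⟩
      exact ⟨rpow_pos_of_pos hx.1 p, rpow_lt_one hx.1.le hx.2 hp⟩
    · intro hy
      refine ⟨y ^ p⁻¹, ⟨rpow_pos_of_pos hy.1 _, rpow_lt_one hy.1.le hy.2 (inv_pos.2 hp)⟩,
        ?_⟩
      simp [← rpow_mul hy.1.le, hp.ne']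
  have hchange :=
    integral_image_eq_integral_abs_deriv_smul (measurableSet_Ioo (a := 0) (b := 1))
    (fun x hx ↦ (hasDerivAt_rpow_const (Or.inl hx.1.ne')).hasDerivWithinAt)
    ((rpow_left_injOn hp.ne').mono fun x hx ↦ hx.1.le) g
  rw [himage] at hchange
  rw [hchange]
  refine setIntegral_congr_fun measurableSet_Ioo fun x hx ↦ ?_
  rw [abs_of_nonneg (mul_nonneg hp.le (rpow_nonneg hx.1.le _))]

theorem integral_rpow_mul_one_sub_rpow {a b : ℝ} (ha : 0 < a) (hb : 0 < b) :
    ∫ x in (0 : ℝ)..1, x ^ (a - 1) * (1 - x) ^ (b - 1) = Gamma a * Gamma b / Gamma (a + b) := by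
  apply Complex.ofReal_injective
  rw [← intervalIntegral.integral_ofReal]
  push_cast
  rw [← Complex.Gamma_ofReal, ← Complex.Gamma_ofReal, ← Complex.Gamma_ofReal,
    Complex.ofReal_add, ← Complex.betaIntegral_eq_Gamma_mul_div _ _ (by simpa) (by simpa),
    Complex.betaIntegral]
  refine intervalIntegral.integral_congr fun x hx ↦ ?_
  rw [uIcc_of_le zero_le_one] at hx
  rw [Complex.ofReal_cpow hx.1, Complex.ofReal_cpow (sub_nonneg.2 hx.2)]
  push_cast
  rfl

theorem integral_one_sub_rpow_rpow {p s : ℝ} (hp : 0 < p) (hs : 0 < s) :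
    ∫ x in (0 : ℝ)..1, (1 - x ^ p) ^ (s - 1) =
      Gamma p⁻¹ * Gamma s / (p * Gamma (p⁻¹ + s)) := by
  have hsubst := integral_comp_rpow_Ioo_zero_one (fun y ↦ (1 - y ^ p) ^ (s - 1)) (inv_pos.2 hp)
  have hbeta := integral_rpow_mul_one_sub_rpow (inv_pos.2 hp) hs
  rw [intervalIntegral.integral_of_le zero_le_one, integral_Ioc_eq_integral_Ioo] at hbeta ⊢
  rw [← hsubst, setIntegral_congr_fun measurableSet_Ioo
    (g := fun x ↦ p⁻¹ * (x ^ (p⁻¹ - 1) * (1 - x) ^ (s - 1))), integral_const_mul, hbeta]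
  · field_simp
  · intro x hx
    simp only [smul_eq_mul, ← rpow_mul hx.1.le, inv_mul_cancel₀ hp.ne', rpow_one]
    ring

theorem Gamma_one_fourth_mul_Gamma_three_fourths : Gamma (1 / 4) * Gamma (3 / 4) = π * √2 := by
  have h := Gamma_mul_Gamma_one_sub (1 / 4)
  rw [show (1 : ℝ) - 1 / 4 = 3 / 4 by norm_num, show π * (1 / 4) = π / 4 by ring,
    sin_pi_div_four] at h
  have : √2 ≠ 0 := by positivity
  rw [h]
  field_simp
  rw [sq_sqrt zero_le_two]

theorem lemniscate_integral_eq_gamma :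
    ∫ x in (0:ℝ)..1, 1 / Real.sqrt (1 - x ^ 4) =
      Real.Gamma (1 / 4) ^ 2 / (4 * Real.sqrt (2 * π)) := by
  have hintegrand : ∀ x ∈ uIcc (0 : ℝ) 1,
      1 / √(1 - x ^ 4) = (1 - x ^ (4 : ℝ)) ^ ((1 / 2 : ℝ) - 1) := by
    intro x hx
    rw [uIcc_of_le zero_le_one] at hx
    have : 0 ≤ 1 - x ^ 4 := sub_nonneg.2 (pow_le_one₀ hx.1 hx.2)
    rw [rpow_ofNat, sqrt_eq_rpow, show (1 / 2 : ℝ) - 1 = -(1 / 2) by norm_num, rpow_neg this,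
      one_div]
  rw [intervalIntegral.integral_congr hintegrand, integral_one_sub_rpow_rpow four_pos one_half_pos,
    show (4 : ℝ)⁻¹ + 1 / 2 = 3 / 4 by norm_num, one_div 4, Gamma_one_half_eq,
    sqrt_mul zero_le_two]
  field_simp
  rw [Gamma_one_fourth_mul_Gamma_three_fourths, sq_sqrt pi_pos.le]
end
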